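/- Let n be a natural number and let c₊₊, c₊₀, c₀₀, c₊₋, c₀₋, c₋₋, c₊, c₀, c₋, c✶ be arbitrary real constants. Then the operator −H = c₊₊J₊² + c₊₀(J₊J₀ + J₀J₊) + c₀₀J₀² + c₊₋(J₊J₋ + J₋J₊) + c₀₋(J₀J₋ + J₋J₀) + c₋₋J₋² + c₊J₊ + c₀J₀ + c₋J₋ + c✶·id maps every real polynomial of degree ≤ n to a polynomial of degree ≤ n; i.e. the general quadratic combination of the sl(2,ℝ) generators preserves the finite-dimensional space 𝒫_{n+1} = ⟨1, X, …, Xⁿ⟩ and is therefore quasi-exactly solvable. -/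

import Mathlib

/-!
The space `degreeLE ℝ n` is invariant under each generator: `J₋` and `J₀` do not raise degree,
and `J₊ Xᵏ = (k - n) Xᵏ⁺¹`, so the only monomial that could leave the space, `Xⁿ`, is killed.
Every polynomial expression in the generators then preserves it as well.
-/

open Polynomial

/-- The lowering generator on `ℝ[X]`: `J₋p = p'`. -/
noncomputable def Jm (p : Polynomial ℝ) : Polynomial ℝ := derivative p

/-- The Cartan generator on `ℝ[X]`: `J₀p = X·p' − (n/2)·p`. -/
noncomputable def J0 (n : ℕ) (p : Polynomial ℝ) : Polynomial ℝ :=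
  X * derivative p - C ((n : ℝ) / 2) * p

/-- The raising generator on `ℝ[X]`: `J₊p = X²·p' − n·X·p`. -/
noncomputable def Jp (n : ℕ) (p : Polynomial ℝ) : Polynomial ℝ :=
  X ^ 2 * derivative p - C (n : ℝ) * X * p


section CommRing

variable {R : Type*} [CommRing R]

theorem coeff_X_mul_derivative (p : R[X]) (k : ℕ) :
    (X * derivative p).coeff k = k * p.coeff k := by
  cases k with
  | zero => simp
  | succ k => rw [coeff_X_mul, coeff_derivative]; push_cast; ring

theorem coeff_X_sq_mul_derivative_sub_succ (a : R) (p : R[X]) (k : ℕ) :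
    (X ^ 2 * derivative p - C a * X * p).coeff (k + 1) = (k - a) * p.coeff k := by
  rw [sq, mul_assoc, mul_assoc, coeff_sub, coeff_X_mul, coeff_X_mul_derivative, coeff_C_mul,
    coeff_X_mul]
  ring

theorem degree_X_mul_derivative_le {n : ℕ} {p : R[X]} (hp : p.degree ≤ n) :
    (X * derivative p).degree ≤ (n : WithBot ℕ) := by
  rw [degree_le_iff_coeff_zero] at hp ⊢
  intro m hm
  rw [coeff_X_mul_derivative, hp m hm, mul_zero]

theorem degree_X_sq_mul_derivative_sub_le {n : ℕ} {p : R[X]} (hp : p.degree ≤ n) :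
    (X ^ 2 * derivative p - C (n : R) * X * p).degree ≤ (n : WithBot ℕ) := by
  rw [degree_le_iff_coeff_zero] at hp ⊢
  intro m hm
  have hnm : n < m := by exact_mod_cast hm
  obtain ⟨k, rfl⟩ : ∃ k, m = k + 1 := Nat.exists_eq_add_one.mpr (by omega)
  rw [coeff_X_sq_mul_derivative_sub_succ]
  rcases (Nat.lt_succ_iff.mp hnm).eq_or_lt with rfl | hk
  · rw [sub_self, zero_mul]
  · rw [hp k (by exact_mod_cast hk), mul_zero]

end CommRing

theorem Jm_mem_degreeLE {n : ℕ} {p : ℝ[X]} (hp : p ∈ degreeLE ℝ n) : Jm p ∈ degreeLE ℝ n :=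
  mem_degreeLE.mpr (degree_derivative_le.trans (mem_degreeLE.mp hp))

theorem J0_mem_degreeLE {n : ℕ} {p : ℝ[X]} (hp : p ∈ degreeLE ℝ n) : J0 n p ∈ degreeLE ℝ n := by
  rw [J0, C_mul']
  exact sub_mem (mem_degreeLE.mpr (degree_X_mul_derivative_le (mem_degreeLE.mp hp)))
    (Submodule.smul_mem _ _ hp)

theorem Jp_mem_degreeLE {n : ℕ} {p : ℝ[X]} (hp : p ∈ degreeLE ℝ n) : Jp n p ∈ degreeLE ℝ n :=
  mem_degreeLE.mpr (degree_X_sq_mul_derivative_sub_le (mem_degreeLE.mp hp))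

/-- The general quadratic combination of the `sl(2,ℝ)` generators preserves the space of
polynomials of degree at most `n`, hence is quasi-exactly solvable. -/
theorem general_QES_operator_preserves_Pn (n : ℕ)
    (cpp cp0 c00 cpm c0m cmm cp c0 cm cs : ℝ)
    (p : Polynomial ℝ) (hp : p.degree ≤ n) :
    (C cpp * Jp n (Jp n p)
      + C cp0 * (Jp n (J0 n p) + J0 n (Jp n p))
      + C c00 * J0 n (J0 n p)
      + C cpm * (Jp n (Jm p) + Jm (Jp n p))
      + C c0m * (J0 n (Jm p) + Jm (J0 n p))
      + C cmm * Jm (Jm p)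
      + C cp * Jp n p + C c0 * J0 n p + C cm * Jm p + C cs * p).degree ≤ n := by
  rw [← mem_degreeLE] at hp ⊢
  simp only [C_mul']
  -- `with_reducible` stops `apply` from unfolding `Jp`, `J0` into sums and scalar multiples.
  with_reducible repeat' first
    | apply Submodule.add_mem | apply Submodule.smul_mem
    | apply Jm_mem_degreeLE | apply J0_mem_degreeLE | apply Jp_mem_degreeLE
    | exact hp
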